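/- arXiv:1907.04303 — 4 statements merged into one kernel-verified Lean document; each statement's English description precedes it below -/
import Mathlib

section
/- With the integral representation ₀F₁(n/2, D²/4) = ∫_{V_{n,p}} etr(D M̃ᵀ X) dμ(X) over the Stiefel manifold V_{n,p} (n ≥ p), for every δ > 0 there exists a constant K_{n,p,δ} > 0, depending only on n, p, δ, such that for all diagonal D with positive diagonal entries d₁,…,d_p: ₀F₁(n/2, D²/4) > K_{n,p,δ} · exp((1−δ)(d₁+⋯+d_p)). -/
/-!
Since `μ` is carried by the compact set `V_{n,p}` and is invariant under the orthogonal group,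
which acts transitively on `V_{n,p}`, the open set `A_δ = {X | X_{jj} > 1 - δ for all j}` has
positive measure: finitely many orthogonal translates of `A_δ` cover `V_{n,p}`, and they all have
measure `μ A_δ`. On `A_δ` the integrand is at least `exp ((1 - δ) ∑ dⱼ)`, so
`K = μ A_δ / 2` works.
-/

open Matrix MeasureTheory

/-- Borel (product) σ-algebra on real matrices. -/
instance matrixMeasurableSpace {n p : ℕ} : MeasurableSpace (Matrix (Fin n) (Fin p) ℝ) :=
  inferInstanceAs (MeasurableSpace (Fin n → Fin p → ℝ))

/-- The hypergeometric function `₀F₁(n/2, D²/4)` represented as the integral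
`∫_{V_{n,p}} etr(D M̃ᵀ X) dμ(X) = ∫ exp(∑ⱼ dⱼ X_{j,j}) dμ(X)` over the Stiefel manifold. -/
noncomputable def hypF {n p : ℕ} (hnp : p ≤ n) (μ : Measure (Matrix (Fin n) (Fin p) ℝ))
    (d : Fin p → ℝ) : ℝ :=
  ∫ X, Real.exp (∑ j : Fin p, d j * X (Fin.castLE hnp j) j) ∂μ

instance matrixBorelSpace {n p : ℕ} : BorelSpace (Matrix (Fin n) (Fin p) ℝ) :=
  inferInstanceAs (BorelSpace (Fin n → Fin p → ℝ))

theorem measure_pos_of_isCompact_subset_iUnion_preimage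
    {α ι : Type*} [TopologicalSpace α] [MeasurableSpace α] {μ : Measure α}
    {S U : Set α} (hS : IsCompact S) (hμS : μ S ≠ 0) (f : ι → α → α)
    (hopen : ∀ i, IsOpen (f i ⁻¹' U)) (hcover : S ⊆ ⋃ i, f i ⁻¹' U)
    (hμf : ∀ i, μ (f i ⁻¹' U) = μ U) : 0 < μ U := by
  obtain ⟨t, ht⟩ := hS.elim_finite_subcover _ hopen hcover
  refine pos_iff_ne_zero.mpr fun hU => hμS (measure_mono_null ht ?_)
  exact (measure_biUnion_null_iff t.countable_toSet).mpr fun i _ => (hμf i).trans hU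

def stiefel (n p : ℕ) : Set (Matrix (Fin n) (Fin p) ℝ) := {X | Xᵀ * X = 1}

theorem abs_apply_le_one_of_mem_stiefel {n p : ℕ} {X : Matrix (Fin n) (Fin p) ℝ}
    (hX : X ∈ stiefel n p) (i : Fin n) (j : Fin p) : |X i j| ≤ 1 := by
  have hcol : ∑ k, X k j ^ 2 = 1 := by
    simpa [mul_apply, sq] using congrFun (congrFun hX j) j
  rw [← sq_le_one_iff_abs_le_one, ← hcol]
  exact Finset.single_le_sum (fun k _ => sq_nonneg (X k j)) (Finset.mem_univ i)

theorem isClosed_stiefel (n p : ℕ) : IsClosed (stiefel n p) :=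
  isClosed_eq (continuous_id.matrix_transpose.matrix_mul continuous_id) continuous_const

theorem isCompact_stiefel (n p : ℕ) : IsCompact (stiefel n p) := by
  refine (isCompact_univ_pi fun _ => isCompact_univ_pi fun _ => isCompact_Icc (a := (-1 : ℝ))
    (b := 1)).of_isClosed_subset (isClosed_stiefel n p) fun X hX i _ j _ => ?_
  exact abs_le.mp (abs_apply_le_one_of_mem_stiefel hX i j)

theorem orthonormal_columns_of_mem_stiefel {n p : ℕ} {Y : Matrix (Fin n) (Fin p) ℝ}
    (hY : Y ∈ stiefel n p) :
    Orthonormal ℝ fun j => (WithLp.toLp 2 (Yᵀ j) : EuclideanSpace ℝ (Fin n)) := by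
  rw [orthonormal_iff_ite]
  intro i j
  rw [EuclideanSpace.inner_toLp_toLp, ← one_apply, ← show Yᵀ * Y = 1 from hY, mul_apply]
  simp [dotProduct, mul_comm]

theorem exists_orthogonal_extension {n p : ℕ} (hnp : p ≤ n) {Y : Matrix (Fin n) (Fin p) ℝ}
    (hY : Y ∈ stiefel n p) :
    ∃ Q : Matrix (Fin n) (Fin n) ℝ, Qᵀ * Q = 1 ∧ ∀ i j, Q i (Fin.castLE hnp j) = Y i j := by
  set u := fun j => (WithLp.toLp 2 (Yᵀ j) : EuclideanSpace ℝ (Fin n))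
  have hinj : Function.Injective (Fin.castLE hnp) := Fin.castLE_injective hnp
  set v := Function.extend (Fin.castLE hnp) u 0
  have hv : (Set.range (Fin.castLE hnp)).domRestrict v = u ∘ (Equiv.ofInjective _ hinj).symm := by
    ext ⟨_, j, rfl⟩ : 1
    simpa [Equiv.ofInjective_symm_apply] using hinj.extend_apply u 0 j
  obtain ⟨b, hb⟩ := Orthonormal.exists_orthonormalBasis_extension_of_card_eq (by simp)
    (hv ▸ (orthonormal_columns_of_mem_stiefel hY).comp _ (Equiv.injective _))
  refine ⟨(EuclideanSpace.basisFun (Fin n) ℝ).toBasis.toMatrix b, ?_, fun i j => ?_⟩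
  · simpa [mem_unitaryGroup_iff', star_eq_conjTranspose] using
      (EuclideanSpace.basisFun (Fin n) ℝ).toMatrix_orthonormalBasis_mem_unitary b
  · simp [Module.Basis.toMatrix_apply, hb _ (Set.mem_range_self j), v, hinj.extend_apply, u]

def diagBand {n p : ℕ} (hnp : p ≤ n) (δ : ℝ) : Set (Matrix (Fin n) (Fin p) ℝ) :=
  {X | ∀ j, 1 - δ < X (Fin.castLE hnp j) j}

theorem isOpen_diagBand {n p : ℕ} (hnp : p ≤ n) (δ : ℝ) : IsOpen (diagBand hnp δ) := by
  simp only [diagBand, Set.ofPred_forall]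
  exact isOpen_iInter_of_finite fun j => isOpen_lt continuous_const (by fun_prop)

theorem stiefel_subset_iUnion_preimage_diagBand {n p : ℕ} (hnp : p ≤ n) {δ : ℝ} (hδ : 0 < δ) :
    stiefel n p ⊆ ⋃ Q : {Q : Matrix (Fin n) (Fin n) ℝ // Qᵀ * Q = 1},
      (Q.1 * ·) ⁻¹' diagBand hnp δ := by
  intro Y hY
  obtain ⟨Q, hQ, hQY⟩ := exists_orthogonal_extension hnp hY
  refine Set.mem_iUnion.mpr ⟨⟨Qᵀ, by simpa using mul_eq_one_comm.mp hQ⟩, fun j => ?_⟩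
  have : (Qᵀ * Y) (Fin.castLE hnp j) j = (Yᵀ * Y) j j := by
    simp only [mul_apply, transpose_apply, hQY]
  show 1 - δ < (Qᵀ * Y) (Fin.castLE hnp j) j
  rw [this, show Yᵀ * Y = 1 from hY, one_apply_eq]
  linarith

theorem measure_diagBand_pos {n p : ℕ} (hnp : p ≤ n) {μ : Measure (Matrix (Fin n) (Fin p) ℝ)}
    (hsupp : μ (stiefel n p) ≠ 0)
    (hinv : ∀ Q : Matrix (Fin n) (Fin n) ℝ, Qᵀ * Q = 1 → Measure.map (fun X => Q * X) μ = μ)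
    {δ : ℝ} (hδ : 0 < δ) : 0 < μ (diagBand hnp δ) := by
  have hmul (Q : Matrix (Fin n) (Fin n) ℝ) : Continuous fun X : Matrix (Fin n) (Fin p) ℝ => Q * X :=
    continuous_const.matrix_mul continuous_id
  refine measure_pos_of_isCompact_subset_iUnion_preimage (isCompact_stiefel n p) hsupp
    (fun (Q : {Q : Matrix (Fin n) (Fin n) ℝ // Qᵀ * Q = 1}) X => Q.1 * X)
    (fun Q => (isOpen_diagBand hnp δ).preimage (hmul Q.1))
    (stiefel_subset_iUnion_preimage_diagBand hnp hδ) fun Q => ?_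
  rw [← Measure.map_apply (hmul Q.1).measurable (isOpen_diagBand hnp δ).measurableSet,
    hinv Q.1 Q.2]

theorem Continuous.integrable_of_ae_mem_isCompact {α E : Type*} [TopologicalSpace α]
    [T2Space α] [MeasurableSpace α] [OpensMeasurableSpace α] [NormedAddCommGroup E]
    {μ : Measure α} [IsFiniteMeasure μ] {K : Set α} (hK : IsCompact K) (hμK : ∀ᵐ x ∂μ, x ∈ K)
    {f : α → E} (hf : Continuous f) : Integrable f μ := by
  rw [← Measure.restrict_eq_self_of_ae_mem hμK]
  exact hf.continuousOn.integrableOn_compact hK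

/-- For every `δ > 0` there exists a constant `K = K_{n,p,δ} > 0` such that for all diagonal `D`
with positive diagonal entries `d₁,…,d_p`:
`₀F₁(n/2, D²/4) > K · exp((1−δ)(d₁+⋯+d_p))`, where `μ` is the normalized Haar probability
measure on the Stiefel manifold `V_{n,p}`, `n ≥ p`. -/
theorem stmt3 {n p : ℕ} (hnp : p ≤ n) (μ : Measure (Matrix (Fin n) (Fin p) ℝ))
    (hprob : IsProbabilityMeasure μ)
    (hsupp : μ {X : Matrix (Fin n) (Fin p) ℝ | Xᵀ * X = 1} = 1)
    (hinv : ∀ Q : Matrix (Fin n) (Fin n) ℝ, Qᵀ * Q = 1 →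
      Measure.map (fun X => Q * X) μ = μ)
    (δ : ℝ) (hδ : 0 < δ) :
    ∃ K : ℝ, 0 < K ∧ ∀ d : Fin p → ℝ, (∀ j, 0 < d j) →
      K * Real.exp ((1 - δ) * ∑ j, d j) < hypF hnp μ d := by
  have hA : 0 < μ.real (diagBand hnp δ) :=
    ENNReal.toReal_pos (measure_diagBand_pos hnp (by simp [stiefel, hsupp]) hinv hδ).ne'
      (measure_ne_top _ _)
  refine ⟨μ.real (diagBand hnp δ) / 2, by positivity, fun d hd => ?_⟩
  set c := Real.exp ((1 - δ) * ∑ j, d j)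
  have hae : ∀ᵐ X ∂μ, X ∈ stiefel n p :=
    (prob_compl_eq_zero_iff (isClosed_stiefel n p).measurableSet).mpr hsupp
  have hint : Integrable (fun X => Real.exp (∑ j : Fin p, d j * X (Fin.castLE hnp j) j)) μ :=
    Continuous.integrable_of_ae_mem_isCompact (isCompact_stiefel n p) hae (by fun_prop)
  have hband : diagBand hnp δ ⊆ {X | c ≤ Real.exp (∑ j : Fin p, d j * X (Fin.castLE hnp j) j)} :=
    fun X hX => Real.exp_le_exp.mpr <| by
      rw [Finset.mul_sum]
      exact Finset.sum_le_sum fun j _ => by nlinarith [hX j, hd j]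
  calc μ.real (diagBand hnp δ) / 2 * c < c * μ.real (diagBand hnp δ) := by
        nlinarith [Real.exp_pos ((1 - δ) * ∑ j, d j)]
    _ ≤ c * μ.real {X | c ≤ Real.exp (∑ j : Fin p, d j * X (Fin.castLE hnp j) j)} := by
        gcongr
        exact measure_ne_top _ _
    _ ≤ hypF hnp μ d :=
        mul_meas_ge_le_integral_of_nonneg (.of_forall fun _ => (Real.exp_pos _).le) hint c
end

section
/- For ν ≥ 1/2 and x > 0, the modified Bessel function ratio satisfies I_ν(x)/I_{ν−1}(x) ≤ x / ((ν − 1/2) + √((ν − 1/2)² + x²)). -/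
/-!
Write `I_μ(x) = (x/2)^μ F_μ((x/2)²)` with the entire series `F_μ(t) = Σ t^k / (k! Γ(k+μ+1))`.
The coefficients of the Cauchy product `F_μ F_ρ` have a closed form (a Vandermonde identity for
`Γ`, proved by induction through `(k+1) a_{k+1} = a'_k`), and comparing them termwise gives the
Turán-type inequality `2t (F_ν² - F_{ν-1} F_{ν+1}) ≤ F_ν F_{ν-1}` for `ν ≥ 1/2`. With the
recurrence `F_{ν-1} = ν F_ν + t F_{ν+1}` this says that `y = I_ν(x)/I_{ν-1}(x)` satisfies
`x y² + (2ν - 1) y ≤ x`, so `y` lies below the positive root `x / ((ν-1/2) + √((ν-1/2)² + x²))`.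
-/

/-- The modified Bessel function of the first kind,
`I_ν(x) = Σ_{k≥0} (x/2)^{2k+ν} / (k! Γ(k+ν+1))`. -/
noncomputable def besselI (ν x : ℝ) : ℝ :=
  ∑' k : ℕ, (x / 2) ^ (2 * (k : ℝ) + ν) / ((k.factorial : ℝ) * Real.Gamma ((k : ℝ) + ν + 1))

open Finset Real Nat

lemma le_div_add_sqrt_of_mul_sq_add_le {x y s : ℝ} (hx : 0 < x) (h : x * y ^ 2 + 2 * s * y ≤ x) :
    y ≤ x / (s + √(s ^ 2 + x ^ 2)) := by
  set R := √(s ^ 2 + x ^ 2)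
  have hR : R ^ 2 = s ^ 2 + x ^ 2 := sq_sqrt (by positivity)
  have hR0 : 0 ≤ R := sqrt_nonneg _
  have hsR : 0 < s + R := by nlinarith
  rw [le_div_iff₀ hsR]
  have hxy : x * y ≤ R - s := by nlinarith
  nlinarith

lemma succ_mul_sum_antidiagonal_succ {a b a' b' : ℕ → ℝ}
    (ha : ∀ i : ℕ, ((i : ℝ) + 1) * a (i + 1) = a' i)
    (hb : ∀ j : ℕ, ((j : ℝ) + 1) * b (j + 1) = b' j) (k : ℕ) :
    ((k : ℝ) + 1) * ∑ p ∈ antidiagonal (k + 1), a p.1 * b p.2 =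
      ∑ p ∈ antidiagonal k, a' p.1 * b p.2 + ∑ p ∈ antidiagonal k, a p.1 * b' p.2 := by
  have hsplit : ((k : ℝ) + 1) * ∑ p ∈ antidiagonal (k + 1), a p.1 * b p.2 =
      ∑ p ∈ antidiagonal (k + 1), (p.1 : ℝ) * (a p.1 * b p.2) +
        ∑ p ∈ antidiagonal (k + 1), (p.2 : ℝ) * (a p.1 * b p.2) := by
    rw [mul_sum, ← sum_add_distrib]
    refine sum_congr rfl fun p hp ↦ ?_
    have h : (p.1 : ℝ) + p.2 = k + 1 := by exact_mod_cast mem_antidiagonal.mp hp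
    linear_combination (a p.1 * b p.2) * h.symm
  rw [hsplit, Nat.sum_antidiagonal_succ, Nat.sum_antidiagonal_succ']
  simp only [cast_zero, zero_mul, zero_add, cast_succ, ← ha, ← hb]
  congr 1 <;> refine sum_congr rfl fun p _ ↦ by ring

namespace Bessel

noncomputable def coeff (μ : ℝ) (k : ℕ) : ℝ := ((k ! : ℝ) * Gamma (k + μ + 1))⁻¹

noncomputable def series (μ t : ℝ) : ℝ := ∑' k, t ^ k * coeff μ k

variable {μ : ℝ}

lemma coeff_pos (hμ : -1 < μ) (k : ℕ) : 0 < coeff μ k := by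
  have := Gamma_pos_of_pos (show 0 < (k : ℝ) + μ + 1 by linarith [k.cast_nonneg (α := ℝ)])
  unfold coeff
  positivity

lemma succ_mul_coeff_succ (μ : ℝ) (k : ℕ) : ((k : ℝ) + 1) * coeff μ (k + 1) = coeff (μ + 1) k := by
  simp only [coeff, factorial_succ, cast_mul, cast_succ, mul_inv, ← mul_assoc]
  rw [mul_inv_cancel₀ (by positivity), one_mul]
  ring_nf

lemma coeff_eq_mul_coeff_add_one {k : ℕ} (h : (k : ℝ) + μ + 1 ≠ 0) :
    coeff μ k = ((k : ℝ) + μ + 1) * coeff (μ + 1) k := by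
  rw [coeff, coeff, show (k : ℝ) + (μ + 1) + 1 = (k + μ + 1) + 1 by ring, Gamma_add_one h,
    mul_left_comm, mul_inv (k + μ + 1 : ℝ), ← mul_assoc, mul_inv_cancel₀ h, one_mul]

lemma coeff_succ (hμ : -1 < μ) (k : ℕ) :
    coeff μ (k + 1) = coeff μ k / (((k : ℝ) + 1) * (k + μ + 1)) := by
  have hk : (0 : ℝ) < k + μ + 1 := by linarith [k.cast_nonneg (α := ℝ)]
  rw [coeff_eq_mul_coeff_add_one (k := k) hk.ne', ← succ_mul_coeff_succ]
  field_simp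

lemma summable_series (hμ : -1 < μ) (t : ℝ) : Summable fun k ↦ t ^ k * coeff μ k := by
  refine summable_of_ratio_norm_eventually_le (r := 1 / 2) (by norm_num) ?_
  filter_upwards [tendsto_natCast_atTop_atTop.eventually_ge_atTop (2 * |t|)] with k hk
  have hpos : (0 : ℝ) < ((k : ℝ) + 1) * (k + μ + 1) := by
    nlinarith [k.cast_nonneg (α := ℝ)]
  have hle : 2 * |t| ≤ ((k : ℝ) + 1) * (k + μ + 1) := by nlinarith
  have hc := (coeff_pos hμ k).le
  calc ‖t ^ (k + 1) * coeff μ (k + 1)‖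
      = |t| / (((k : ℝ) + 1) * (k + μ + 1)) * ‖t ^ k * coeff μ k‖ := by
        simp only [coeff_succ hμ, norm_mul, norm_pow, norm_div, norm_of_nonneg hpos.le,
          norm_of_nonneg hc, Real.norm_eq_abs, pow_succ]
        ring
    _ ≤ 1 / 2 * ‖t ^ k * coeff μ k‖ := by
        refine mul_le_mul_of_nonneg_right ?_ (norm_nonneg _)
        rw [div_le_iff₀ hpos]
        linarith

lemma series_pos (hμ : -1 < μ) {t : ℝ} (ht : 0 ≤ t) : 0 < series μ t := by
  refine (summable_series hμ t).tsum_pos (fun k ↦ ?_) 0 (by simpa using coeff_pos hμ 0)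
  exact mul_nonneg (pow_nonneg ht k) (coeff_pos hμ k).le

lemma besselI_eq (μ : ℝ) {x : ℝ} (hx : 0 < x) :
    besselI μ x = (x / 2) ^ μ * series μ ((x / 2) ^ 2) := by
  rw [besselI, series, ← tsum_mul_left]
  congr 1 with k
  rw [rpow_add (by positivity), show (2 : ℝ) * k = ((2 * k : ℕ) : ℝ) by push_cast; ring,
    rpow_natCast, pow_mul, coeff]
  ring

lemma hasSum_series (hμ : -1 < μ) (t : ℝ) :
    HasSum (fun k ↦ t ^ k * coeff μ k) (series μ t) :=
  (summable_series hμ t).hasSum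

lemma series_sub_one {ν : ℝ} (hν : 0 < ν) (t : ℝ) :
    series (ν - 1) t = ν * series ν t + t * series (ν + 1) t := by
  have hshift : HasSum (fun k : ℕ ↦ t ^ k * ((k : ℝ) * coeff ν k)) (t * series (ν + 1) t) := by
    rw [← hasSum_nat_add_iff' 1]
    have h : (fun k ↦ t ^ (k + 1) * (((k + 1 : ℕ) : ℝ) * coeff ν (k + 1))) =
        fun k ↦ t * (t ^ k * coeff (ν + 1) k) := by
      ext k
      rw [← succ_mul_coeff_succ]
      push_cast
      ring
    have hs := (hasSum_series (μ := ν + 1) (by linarith) t).mul_left t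
    rw [← h] at hs
    simpa using hs
  rw [← (((hasSum_series (μ := ν) (by linarith) t).mul_left ν).add hshift).tsum_eq, series]
  congr 1 with k
  have h := coeff_eq_mul_coeff_add_one (μ := ν - 1) (k := k) (by linarith [k.cast_nonneg (α := ℝ)])
  rw [sub_add_cancel] at h
  rw [h]
  ring

noncomputable def prodCoeff (μ ρ : ℝ) (k : ℕ) : ℝ :=
  Gamma (μ + ρ + 2 * k + 1) / (Gamma (μ + ρ + k + 1) * k ! * Gamma (k + μ + 1) * Gamma (k + ρ + 1))

variable {ρ : ℝ}

lemma succ_mul_prodCoeff_succ (hμ : -1 < μ) (hρ : -1 < ρ) (hσ : -1 < μ + ρ) (k : ℕ) :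
    ((k : ℝ) + 1) * prodCoeff μ ρ (k + 1) = prodCoeff (μ + 1) ρ k + prodCoeff μ (ρ + 1) k := by
  have hk : (0 : ℝ) ≤ k := k.cast_nonneg
  have hA := Gamma_pos_of_pos (show 0 < μ + ρ + 2 * k + 1 by linarith)
  have hB := Gamma_pos_of_pos (show 0 < μ + ρ + k + 2 by linarith)
  have hC := Gamma_pos_of_pos (show 0 < k + μ + 1 by linarith)
  have hD := Gamma_pos_of_pos (show 0 < k + ρ + 1 by linarith)
  have hμk : (k : ℝ) + μ + 1 ≠ 0 := by linarith
  have hρk : (k : ℝ) + ρ + 1 ≠ 0 := by linarith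
  simp only [prodCoeff, factorial_succ]
  push_cast
  rw [show μ + ρ + 2 * ((k : ℝ) + 1) + 1 = (μ + ρ + 2 * k + 1) + 1 + 1 by ring,
    show μ + 1 + ρ + 2 * (k : ℝ) + 1 = (μ + ρ + 2 * k + 1) + 1 by ring,
    show μ + (ρ + 1) + 2 * (k : ℝ) + 1 = (μ + ρ + 2 * k + 1) + 1 by ring,
    show μ + ρ + ((k : ℝ) + 1) + 1 = μ + ρ + k + 2 by ring,
    show μ + 1 + ρ + (k : ℝ) + 1 = μ + ρ + k + 2 by ring,
    show μ + (ρ + 1) + (k : ℝ) + 1 = μ + ρ + k + 2 by ring,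
    show (k : ℝ) + 1 + μ + 1 = (k + μ + 1) + 1 by ring,
    show (k : ℝ) + (μ + 1) + 1 = (k + μ + 1) + 1 by ring,
    show (k : ℝ) + 1 + ρ + 1 = (k + ρ + 1) + 1 by ring,
    show (k : ℝ) + (ρ + 1) + 1 = (k + ρ + 1) + 1 by ring,
    Gamma_add_one (s := μ + ρ + 2 * k + 1 + 1) (by linarith),
    Gamma_add_one (s := μ + ρ + 2 * k + 1) (by linarith),
    Gamma_add_one (s := k + μ + 1) (by linarith), Gamma_add_one (s := k + ρ + 1) (by linarith)]
  field_simp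
  ring

lemma sum_antidiagonal_coeff_mul_coeff (hμ : -1 < μ) (hρ : -1 < ρ) (hσ : -1 < μ + ρ) (k : ℕ) :
    ∑ p ∈ antidiagonal k, coeff μ p.1 * coeff ρ p.2 = prodCoeff μ ρ k := by
  induction k generalizing μ ρ with
  | zero =>
    have := Gamma_pos_of_pos (show 0 < μ + ρ + 1 by linarith)
    simp [coeff, prodCoeff]
    field_simp
  | succ k ih =>
    have h := succ_mul_sum_antidiagonal_succ (succ_mul_coeff_succ μ) (succ_mul_coeff_succ ρ) k
    rw [ih (by linarith) hρ (by linarith), ih hμ (by linarith) (by linarith),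
      ← succ_mul_prodCoeff_succ hμ hρ hσ] at h
    exact mul_left_cancel₀ (by positivity) h

lemma hasSum_mul_series (hμ : -1 < μ) (hρ : -1 < ρ) (hσ : -1 < μ + ρ) (t : ℝ) :
    HasSum (fun k ↦ t ^ k * prodCoeff μ ρ k) (series μ t * series ρ t) := by
  have hf := (summable_series hμ t).norm
  have hg := (summable_series hρ t).norm
  have h := (summable_norm_sum_mul_antidiagonal_of_summable_norm hf hg).of_norm.hasSum
  rw [← tsum_mul_tsum_eq_tsum_sum_antidiagonal_of_summable_norm hf hg] at h
  refine h.congr_fun fun k ↦ ?_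
  rw [← sum_antidiagonal_coeff_mul_coeff hμ hρ hσ, mul_sum]
  refine sum_congr rfl fun p hp ↦ ?_
  rw [← mem_antidiagonal.mp hp, pow_add]
  ring

variable {ν : ℝ}

lemma prodCoeff_sub_one_add_one (hν : 0 < ν) (k : ℕ) :
    prodCoeff (ν - 1) (ν + 1) k = (k + ν) / (k + ν + 1) * prodCoeff ν ν k := by
  have hk : (0 : ℝ) ≤ k := k.cast_nonneg
  have hB := Gamma_pos_of_pos (show 0 < 2 * ν + k + 1 by linarith)
  have hC := Gamma_pos_of_pos (show 0 < k + ν by linarith)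
  have hkν : (k : ℝ) + ν ≠ 0 := by linarith
  have hkν1 : (k : ℝ) + ν + 1 ≠ 0 := by linarith
  simp only [prodCoeff]
  rw [show ν - 1 + (ν + 1) = ν + ν by ring, show (k : ℝ) + (ν - 1) + 1 = k + ν by ring,
    show (k : ℝ) + (ν + 1) + 1 = k + ν + 1 + 1 by ring, Gamma_add_one (s := k + ν + 1) hkν1,
    Gamma_add_one (s := k + ν) hkν]
  field_simp

lemma prodCoeff_sub_one_succ (hν : 0 < ν) (k : ℕ) :
    ((k : ℝ) + 1) * (k + ν + 1) * prodCoeff ν (ν - 1) (k + 1) =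
      (2 * ν + 2 * k + 1) * prodCoeff ν ν k := by
  have hk : (0 : ℝ) ≤ k := k.cast_nonneg
  have hB := Gamma_pos_of_pos (show 0 < 2 * ν + k + 1 by linarith)
  have hC := Gamma_pos_of_pos (show 0 < k + ν + 1 by linarith)
  have hkν1 : (k : ℝ) + ν + 1 ≠ 0 := by linarith
  simp only [prodCoeff, factorial_succ]
  push_cast
  rw [show ν + (ν - 1) + 2 * ((k : ℝ) + 1) + 1 = ν + ν + 2 * k + 1 + 1 by ring,
    show ν + (ν - 1) + ((k : ℝ) + 1) + 1 = ν + ν + k + 1 by ring,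
    show (k : ℝ) + 1 + (ν - 1) + 1 = k + ν + 1 by ring,
    show (k : ℝ) + 1 + ν + 1 = k + ν + 1 + 1 by ring,
    Gamma_add_one (s := k + ν + 1) hkν1, Gamma_add_one (s := ν + ν + 2 * k + 1) (by linarith)]
  field_simp
  ring

lemma prodCoeff_pos (hμ : -1 < μ) (hρ : -1 < ρ) (hσ : -1 < μ + ρ) (k : ℕ) :
    0 < prodCoeff μ ρ k := by
  have hk : (0 : ℝ) ≤ k := k.cast_nonneg
  have := Gamma_pos_of_pos (show 0 < μ + ρ + 2 * k + 1 by linarith)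
  have := Gamma_pos_of_pos (show 0 < μ + ρ + k + 1 by linarith)
  have := Gamma_pos_of_pos (show 0 < k + μ + 1 by linarith)
  have := Gamma_pos_of_pos (show 0 < k + ρ + 1 by linarith)
  unfold prodCoeff
  positivity

-- Both sides are multiples of `prodCoeff ν ν k`; the comparison is `2 (k + 1) ≤ 2ν + 2k + 1`.
lemma two_mul_sub_prodCoeff_le (hν : 1 / 2 ≤ ν) (k : ℕ) :
    2 * (prodCoeff ν ν k - prodCoeff (ν - 1) (ν + 1) k) ≤ prodCoeff ν (ν - 1) (k + 1) := by
  have hk : (0 : ℝ) ≤ k := k.cast_nonneg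
  have hP := prodCoeff_pos (μ := ν) (ρ := ν) (by linarith) (by linarith) (by linarith) k
  have hpos : (0 : ℝ) < (k + 1) * (k + ν + 1) := by nlinarith
  have hsub : ((k : ℝ) + 1) * (k + ν + 1) *
      (2 * (prodCoeff ν ν k - prodCoeff (ν - 1) (ν + 1) k)) = 2 * (k + 1) * prodCoeff ν ν k := by
    rw [prodCoeff_sub_one_add_one (by linarith)]
    field_simp
    ring
  refine le_of_mul_le_mul_left ?_ hpos
  rw [hsub, prodCoeff_sub_one_succ (by linarith)]
  nlinarith

lemma two_mul_mul_sq_sub_le (hν : 1 / 2 ≤ ν) {t : ℝ} (ht : 0 ≤ t) :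
    2 * t * (series ν t ^ 2 - series (ν - 1) t * series (ν + 1) t) ≤
      series ν t * series (ν - 1) t := by
  have h₀ : HasSum (fun k ↦ t ^ k * prodCoeff ν ν k) (series ν t ^ 2) := by
    rw [sq]; exact hasSum_mul_series (by linarith) (by linarith) (by linarith) t
  have h₁ := hasSum_mul_series (μ := ν - 1) (ρ := ν + 1) (by linarith) (by linarith)
    (by linarith) t
  have h₂ := hasSum_mul_series (μ := ν) (ρ := ν - 1) (by linarith) (by linarith)
    (by linarith) t
  have hlhs := ((h₀.sub h₁).mul_left (2 * t)).congr_fun (g := fun k ↦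
      t ^ (k + 1) * (2 * (prodCoeff ν ν k - prodCoeff (ν - 1) (ν + 1) k))) fun k ↦ by ring
  have hrhs := (hasSum_nat_add_iff' 1).mpr h₂
  simp only [range_one, sum_singleton, pow_zero, one_mul] at hrhs
  have hle := hasSum_le (fun k ↦ mul_le_mul_of_nonneg_left (two_mul_sub_prodCoeff_le hν k)
    (pow_nonneg ht (k + 1))) hlhs hrhs
  have := prodCoeff_pos (μ := ν) (ρ := ν - 1) (by linarith) (by linarith) (by linarith) 0
  linarith

lemma series_quadratic_le (hν : 1 / 2 ≤ ν) {t : ℝ} (ht : 0 ≤ t) :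
    2 * t * series ν t ^ 2 + (2 * ν - 1) * series ν t * series (ν - 1) t ≤
      2 * series (ν - 1) t ^ 2 := by
  linear_combination two_mul_mul_sq_sub_le hν ht -
    2 * series (ν - 1) t * series_sub_one (ν := ν) (by linarith) t

lemma besselI_div_besselI_sub_one (ν : ℝ) {x : ℝ} (hx : 0 < x) :
    besselI ν x / besselI (ν - 1) x =
      x / 2 * series ν ((x / 2) ^ 2) / series (ν - 1) ((x / 2) ^ 2) := by
  have h : (x / 2) ^ ν ≠ 0 := (rpow_pos_of_pos (by positivity) ν).ne'
  rw [besselI_eq ν hx, besselI_eq (ν - 1) hx, rpow_sub_one (by positivity)]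
  field_simp

end Bessel

/-- Segura's bound: for `ν ≥ 1/2` and `x > 0`,
`I_ν(x)/I_{ν−1}(x) ≤ x/((ν−1/2) + √((ν−1/2)² + x²))`. -/
theorem stmt9 (ν x : ℝ) (hν : 1 / 2 ≤ ν) (hx : 0 < x) :
    besselI ν x / besselI (ν - 1) x ≤
      x / ((ν - 1 / 2) + Real.sqrt ((ν - 1 / 2) ^ 2 + x ^ 2)) := by
  have ht : 0 ≤ (x / 2) ^ 2 := sq_nonneg _
  have hFm := Bessel.series_pos (μ := ν - 1) (by linarith) ht
  rw [Bessel.besselI_div_besselI_sub_one ν hx]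
  refine le_div_add_sqrt_of_mul_sq_add_le hx ?_
  set F := Bessel.series ν ((x / 2) ^ 2)
  set Fm := Bessel.series (ν - 1) ((x / 2) ^ 2)
  calc x * (x / 2 * F / Fm) ^ 2 + 2 * (ν - 1 / 2) * (x / 2 * F / Fm)
      = x / (2 * Fm ^ 2) * (2 * (x / 2) ^ 2 * F ^ 2 + (2 * ν - 1) * F * Fm) := by
        field_simp
    _ ≤ x / (2 * Fm ^ 2) * (2 * Fm ^ 2) := by gcongr; exact Bessel.series_quadratic_le hν ht
    _ = x := by field_simp
end

section
/- Let R be a p × p symmetric positive definite matrix and let a ≥ p/2. Then the hypergeometric function of matrix argument satisfies ₀F₁(a, R) ≥ Γ(a) · (tr R)^{(1−a)/2} · I_{a−1}(2 √(tr R)), where I_{a−1} is the modified Bessel function of the first kind. Equivalently, ₀F₁(a, R) ≥ Σ_{k=0}^∞ (tr R)^k / (k! (a)_k) where (a)_k = Γ(a+k)/Γ(a). -/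
open Matrix

/-- Partitions of `k` into at most `p` parts: weakly decreasing `p`-tuples of naturals
summing to `k`. -/
def parts (p k : ℕ) : Finset (Fin p → ℕ) :=
  (Finset.Nat.antidiagonalTuple p k).filter fun κ => ∀ i j : Fin p, i ≤ j → κ j ≤ κ i

/-- The generalized Pochhammer symbol
`(a)_κ = Π_{j=1}^p Γ(a − (j−1)/2 + k_j)/Γ(a − (j−1)/2)`. -/
noncomputable def pochPart (a : ℝ) {p : ℕ} (κ : Fin p → ℕ) : ℝ :=
  ∏ j : Fin p, Real.Gamma (a - (j : ℕ) / 2 + κ j) / Real.Gamma (a - (j : ℕ) / 2)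


/-!
Each factor of `(a)_κ` is a rising factorial `(a - j/2)_{κ_j}` whose base lies in `[1/2, a]`
when `a ≥ p/2`. Raising the bases to `a` and merging the factors, using
`(a)_m (a)_n ≤ (a)_m (a + m)_n = (a)_{m+n}`, gives `(a)_κ ≤ (a)_k`; with `C_κ(R) ≥ 0` and
`Σ_κ C_κ(R) = (tr R)^k` the `k`-th term of `₀F₁(a, R)` is therefore at least
`(tr R)^k / (k! (a)_k)`, the `k`-th term of the Bessel series. Lowering the bases to `1/2` instead
gives `(a)_κ ≥ 2^{-k}`, which bounds the terms by `(2 tr R)^k / k!` and makes the series summable.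
-/

open Finset Polynomial Real
open scoped Nat

lemma ascPochhammer_eval_eq_prod_range {S : Type*} [CommSemiring S] (n : ℕ) (s : S) :
    (ascPochhammer S n).eval s = ∏ i ∈ range n, (s + i) := by
  induction n with
  | zero => simp
  | succ n ih => rw [ascPochhammer_succ_eval, ih, prod_range_succ]

lemma Real.Gamma_add_nat_div_Gamma {x : ℝ} (hx : 0 < x) (n : ℕ) :
    Gamma (x + n) / Gamma x = (ascPochhammer ℝ n).eval x := by
  induction n with
  | zero => simp [(Gamma_pos_of_pos hx).ne']
  | succ n ih =>
    rw [ascPochhammer_succ_eval, ← ih, Nat.cast_succ, ← add_assoc,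
      Gamma_add_one (by positivity : x + n ≠ 0)]
    ring

section AscPochhammer

variable {x y : ℝ}

lemma ascPochhammer_eval_nonneg (hx : 0 ≤ x) (n : ℕ) : 0 ≤ (ascPochhammer ℝ n).eval x :=
  (ascPochhammer_eval_eq_prod_range n x).symm ▸ prod_nonneg fun i _ => by positivity

lemma ascPochhammer_eval_le_of_le (hx : 0 ≤ x) (hxy : x ≤ y) (n : ℕ) :
    (ascPochhammer ℝ n).eval x ≤ (ascPochhammer ℝ n).eval y := by
  simp only [ascPochhammer_eval_eq_prod_range]
  exact prod_le_prod (fun i _ => by positivity) fun i _ => by linarith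

lemma pow_le_ascPochhammer_eval (hx : 0 ≤ x) (n : ℕ) : x ^ n ≤ (ascPochhammer ℝ n).eval x := by
  calc x ^ n = ∏ _i ∈ range n, x := by simp
    _ ≤ _ := by
      rw [ascPochhammer_eval_eq_prod_range]
      exact prod_le_prod (fun _ _ => hx) fun i _ => by simp

lemma ascPochhammer_eval_mul_le (hx : 0 ≤ x) (m n : ℕ) :
    (ascPochhammer ℝ m).eval x * (ascPochhammer ℝ n).eval x ≤
      (ascPochhammer ℝ (m + n)).eval x := by
  rw [← ascPochhammer_mul, eval_mul, eval_comp, eval_add, eval_X, eval_natCast]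
  gcongr
  · exact ascPochhammer_eval_nonneg hx m
  · exact ascPochhammer_eval_le_of_le hx (by simp) n

lemma prod_ascPochhammer_eval_le {ι : Type*} (hx : 0 ≤ x) (s : Finset ι) (f : ι → ℕ) :
    ∏ i ∈ s, (ascPochhammer ℝ (f i)).eval x ≤ (ascPochhammer ℝ (∑ i ∈ s, f i)).eval x := by
  classical
  induction s using Finset.induction_on with
  | empty => simp
  | insert i s hi ih =>
    rw [prod_insert hi, sum_insert hi]
    calc _ ≤ (ascPochhammer ℝ (f i)).eval x * (ascPochhammer ℝ (∑ i ∈ s, f i)).eval x := by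
          gcongr
          exact ascPochhammer_eval_nonneg hx _
      _ ≤ _ := ascPochhammer_eval_mul_le hx _ _

end AscPochhammer

section PochPart

variable {p : ℕ} {a : ℝ}

lemma half_le_sub_fin_half (ha : (p : ℝ) / 2 ≤ a) (j : Fin p) : 1 / 2 ≤ a - (j : ℕ) / 2 := by
  have : ((j : ℕ) : ℝ) + 1 ≤ p := by exact_mod_cast j.2
  linarith

lemma pochPart_eq_prod_ascPochhammer (ha : (p : ℝ) / 2 ≤ a) (κ : Fin p → ℕ) :
    pochPart a κ = ∏ j, (ascPochhammer ℝ (κ j)).eval (a - (j : ℕ) / 2) :=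
  prod_congr rfl fun j _ =>
    Gamma_add_nat_div_Gamma (by linarith [half_le_sub_fin_half ha j]) _

lemma pochPart_le_Gamma_div_Gamma (ha : (p : ℝ) / 2 ≤ a) (ha₀ : 0 < a) (κ : Fin p → ℕ) :
    pochPart a κ ≤ Gamma (a + ↑(∑ j, κ j)) / Gamma a := by
  have hbase := half_le_sub_fin_half ha
  rw [pochPart_eq_prod_ascPochhammer ha, Gamma_add_nat_div_Gamma ha₀]
  calc _ ≤ ∏ j, (ascPochhammer ℝ (κ j)).eval a := by
        refine prod_le_prod (fun j _ => ?_) fun j _ => ?_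
        · exact ascPochhammer_eval_nonneg (by linarith [hbase j]) _
        · exact ascPochhammer_eval_le_of_le (by linarith [hbase j])
            (sub_le_self a (by positivity)) _
    _ ≤ _ := prod_ascPochhammer_eval_le ha₀.le _ _

lemma half_pow_le_pochPart (ha : (p : ℝ) / 2 ≤ a) (κ : Fin p → ℕ) :
    (1 / 2 : ℝ) ^ (∑ j, κ j) ≤ pochPart a κ := by
  have hbase := half_le_sub_fin_half ha
  rw [pochPart_eq_prod_ascPochhammer ha, ← prod_pow_eq_pow_sum]
  refine prod_le_prod (fun j _ => by positivity) fun j _ => ?_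
  calc _ ≤ (a - (j : ℕ) / 2) ^ κ j := pow_le_pow_left₀ (by norm_num) (hbase j) _
    _ ≤ _ := pow_le_ascPochhammer_eval (by linarith [hbase j]) _

lemma pochPart_pos (ha : (p : ℝ) / 2 ≤ a) (κ : Fin p → ℕ) : 0 < pochPart a κ :=
  (pow_pos (by norm_num) _).trans_le (half_pow_le_pochPart ha κ)

lemma sum_eq_of_mem_parts {k : ℕ} {κ : Fin p → ℕ} (hκ : κ ∈ parts p k) : ∑ j, κ j = k :=
  Finset.Nat.mem_antidiagonalTuple.mp (mem_filter.mp hκ).1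

end PochPart

section Series

variable {p k : ℕ} {a : ℝ} {C : (Fin p → ℕ) → ℝ}

lemma sum_div_le_sum_div_pochPart (ha : (p : ℝ) / 2 ≤ a) (ha₀ : 0 < a)
    (hC : ∀ κ ∈ parts p k, 0 ≤ C κ) :
    (∑ κ ∈ parts p k, C κ) / (k ! * (Gamma (a + k) / Gamma a)) ≤
      ∑ κ ∈ parts p k, C κ / (pochPart a κ * k !) := by
  rw [sum_div]
  refine sum_le_sum fun κ hκ => div_le_div_of_nonneg_left (hC κ hκ)
    (by have := pochPart_pos ha κ; positivity) ?_
  rw [mul_comm]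
  gcongr
  simpa only [sum_eq_of_mem_parts hκ] using pochPart_le_Gamma_div_Gamma ha ha₀ κ

lemma sum_div_pochPart_le (ha : (p : ℝ) / 2 ≤ a) (hC : ∀ κ ∈ parts p k, 0 ≤ C κ) :
    ∑ κ ∈ parts p k, C κ / (pochPart a κ * k !) ≤ 2 ^ k * (∑ κ ∈ parts p k, C κ) / k ! := by
  rw [mul_sum, sum_div]
  refine sum_le_sum fun κ hκ => ?_
  have hlow := half_pow_le_pochPart ha κ
  rw [sum_eq_of_mem_parts hκ] at hlow
  calc C κ / (pochPart a κ * k !) ≤ C κ / ((1 / 2) ^ k * k !) := by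
        gcongr
        · exact hC κ hκ
    _ = 2 ^ k * C κ / k ! := by
        rw [one_div, inv_pow]
        field_simp

lemma summable_sum_div_pochPart (ha : (p : ℝ) / 2 ≤ a) {t : ℝ} {C : ℕ → (Fin p → ℕ) → ℝ}
    (hC : ∀ k, ∀ κ ∈ parts p k, 0 ≤ C k κ) (hCsum : ∀ k, ∑ κ ∈ parts p k, C k κ = t ^ k) :
    Summable fun k => ∑ κ ∈ parts p k, C k κ / (pochPart a κ * k !) := by
  refine .of_nonneg_of_le (fun k => sum_nonneg fun κ hκ => ?_) (fun k => ?_)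
    (Real.summable_pow_div_factorial (2 * t))
  · have := pochPart_pos ha κ
    have := hC k κ hκ
    positivity
  · simpa only [hCsum, mul_pow] using sum_div_pochPart_le ha (hC k)

end Series

lemma Gamma_mul_rpow_mul_besselI {t : ℝ} (ht : 0 < t) (a : ℝ) :
    Gamma a * t ^ ((1 - a) / 2) * besselI (a - 1) (2 * √t) =
      ∑' k : ℕ, t ^ k / (k ! * (Gamma (a + k) / Gamma a)) := by
  rw [besselI, ← tsum_mul_left]
  refine tsum_congr fun k => ?_
  have hpow : √t ^ (2 * (k : ℝ) + (a - 1)) = t ^ k * t ^ ((a - 1) / 2) := by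
    rw [sqrt_eq_rpow, ← rpow_mul ht.le, ← rpow_natCast, ← rpow_add ht]
    ring_nf
  have hcancel : t ^ ((1 - a) / 2) * t ^ ((a - 1) / 2) = 1 := by
    rw [← rpow_add ht, show (1 - a) / 2 + (a - 1) / 2 = 0 by ring, rpow_zero]
  rw [mul_div_cancel_left₀ _ two_ne_zero, hpow, show (k : ℝ) + (a - 1) + 1 = a + k by ring,
    ← mul_div_assoc (k ! : ℝ), div_div_eq_mul_div]
  linear_combination (Gamma a * t ^ k / (k ! * Gamma (a + k))) * hcancel

theorem stmt10_general {p : ℕ} (hp : 0 < p) (R : Matrix (Fin p) (Fin p) ℝ)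
    (hRpd : R.PosDef)
    (a : ℝ) (ha : (p : ℝ) / 2 ≤ a)
    (C : (k : ℕ) → (Fin p → ℕ) → ℝ)
    (hCnonneg : ∀ k, ∀ κ ∈ parts p k, 0 ≤ C k κ)
    (hCsum : ∀ k : ℕ, ∑ κ ∈ parts p k, C k κ = R.trace ^ k)
    (F : ℝ)
    (hF : F = ∑' k : ℕ, ∑ κ ∈ parts p k, C k κ / (pochPart a κ * (k.factorial : ℝ))) :
    F ≥ Real.Gamma a * R.trace ^ ((1 - a) / 2) * besselI (a - 1) (2 * Real.sqrt R.trace) ∧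
    F ≥ ∑' k : ℕ, R.trace ^ k /
        ((k.factorial : ℝ) * (Real.Gamma (a + k) / Real.Gamma a)) := by
  have : Nonempty (Fin p) := ⟨⟨0, hp⟩⟩
  have ht := hRpd.trace_pos
  have ha₀ : 0 < a := lt_of_lt_of_le (by positivity) ha
  have hterm (k : ℕ) : R.trace ^ k / (k ! * (Gamma (a + k) / Gamma a)) ≤
      ∑ κ ∈ parts p k, C k κ / (pochPart a κ * k !) :=
    hCsum k ▸ sum_div_le_sum_div_pochPart ha ha₀ (hCnonneg k)
  have hterm_nonneg (k : ℕ) : 0 ≤ R.trace ^ k / (k ! * (Gamma (a + k) / Gamma a)) := by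
    have := Gamma_pos_of_pos ha₀
    have := Gamma_pos_of_pos (by positivity : 0 < a + k)
    positivity
  have hsummable := summable_sum_div_pochPart ha hCnonneg hCsum
  have hbound : ∑' k : ℕ, R.trace ^ k / (k ! * (Gamma (a + k) / Gamma a)) ≤ F :=
    hF ▸ (hsummable.of_nonneg_of_le hterm_nonneg hterm).tsum_le_tsum hterm hsummable
  exact ⟨(Gamma_mul_rpow_mul_besselI ht a).trans_le hbound, hbound⟩

/-- For a `p×p` symmetric positive definite `R` and `a ≥ p/2`, the hypergeometric function of
matrix argument `₀F₁(a,R) = Σ_k Σ_{κ⊢k} C_κ(R)/((a)_κ k!)` (with `C_κ` the zonal polynomials,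
which are nonnegative at positive definite arguments and satisfy `Σ_{κ⊢k} C_κ(R) = (tr R)^k`)
satisfies `₀F₁(a,R) ≥ Γ(a) (tr R)^{(1−a)/2} I_{a−1}(2√(tr R))`, and equivalently
`₀F₁(a,R) ≥ Σ_k (tr R)^k/(k! (a)_k)` with `(a)_k = Γ(a+k)/Γ(a)`. -/
theorem stmt10 {p : ℕ} (hp : 0 < p) (R : Matrix (Fin p) (Fin p) ℝ)
    (hRsym : R.IsSymm) (hRpd : R.PosDef)
    (a : ℝ) (ha : (p : ℝ) / 2 ≤ a)
    (C : (k : ℕ) → (Fin p → ℕ) → ℝ)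
    (hCnonneg : ∀ k, ∀ κ ∈ parts p k, 0 ≤ C k κ)
    (hCsum : ∀ k : ℕ, ∑ κ ∈ parts p k, C k κ = R.trace ^ k)
    (F : ℝ)
    (hF : F = ∑' k : ℕ, ∑ κ ∈ parts p k, C k κ / (pochPart a κ * (k.factorial : ℝ))) :
    F ≥ Real.Gamma a * R.trace ^ ((1 - a) / 2) * besselI (a - 1) (2 * Real.sqrt R.trace) ∧
    F ≥ ∑' k : ℕ, R.trace ^ k /
        ((k.factorial : ℝ) * (Real.Gamma (a + k) / Real.Gamma a)) :=
  stmt10_general hp R hRpd a ha C hCnonneg hCsum F hF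
end

section
/- Let f : ℝ₊ → ℝ₊ be a continuous, log-concave, integrable function with a finite maximizer m (f nondecreasing on (0,m], nonincreasing on [m,∞)). Suppose B > m satisfies f(B)/f(m) < ε for some ε ∈ (0,1). Then ∫_B^∞ f(x) dx / ∫_0^∞ f(x) dx < ε. -/
open MeasureTheory Set

/- For `x > B`, the points `B` and `x - (B - m)` lie between `m` and `x` and have the
same sum, so log-concavity gives `f m * f x ≤ f B * f (x - (B - m))`. Integrating over `x > B`
yields `∫_B^∞ f ≤ (f B / f m) ∫_m^∞ f ≤ (f B / f m) ∫_0^∞ f`, and `f B / f m < ε`. -/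

lemma ConcaveOn.add_le_add_of_add_eq {s : Set ℝ} {g : ℝ → ℝ} (hg : ConcaveOn ℝ s g)
    {a b c d : ℝ} (ha : a ∈ s) (hd : d ∈ s) (hab : a ≤ b) (hbd : b ≤ d) (hsum : b + c = a + d) :
    g a + g d ≤ g b + g c := by
  rcases hab.eq_or_lt with rfl | hab
  · obtain rfl : c = d := by linarith
    exact le_rfl
  have hda : 0 < d - a := by linarith
  set t := (d - b) / (d - a)
  have ht : 0 ≤ t := div_nonneg (by linarith) hda.le
  have ht' : 0 ≤ 1 - t := by
    rw [sub_nonneg, div_le_one hda]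
    linarith
  have hb : t • a + (1 - t) • d = b := by
    simp only [t, smul_eq_mul]
    field_simp
    ring
  have hc : (1 - t) • a + t • d = c := by
    rw [show c = a + d - b by linarith]
    simp only [t, smul_eq_mul]
    field_simp
    ring
  have h₁ := hg.2 ha hd ht ht' (by ring)
  have h₂ := hg.2 ha hd ht' ht (by ring)
  rw [hb] at h₁
  rw [hc] at h₂
  simp only [smul_eq_mul] at h₁ h₂
  linarith

lemma mul_le_mul_of_concaveOn_log {s : Set ℝ} {f : ℝ → ℝ} (hpos : ∀ x ∈ s, 0 < f x)
    (hf : ConcaveOn ℝ s fun x => Real.log (f x)) {a b c d : ℝ} (ha : a ∈ s) (hd : d ∈ s)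
    (hab : a ≤ b) (hbd : b ≤ d) (hsum : b + c = a + d) :
    f a * f d ≤ f b * f c := by
  have hb : b ∈ s := hf.1.ordConnected.out ha hd ⟨hab, hbd⟩
  have hc : c ∈ s := hf.1.ordConnected.out ha hd ⟨by linarith, by linarith⟩
  have hfa := hpos a ha
  have hfb := hpos b hb
  have hfc := hpos c hc
  have hfd := hpos d hd
  rw [← Real.log_le_log_iff (by positivity) (by positivity), Real.log_mul hfa.ne' hfd.ne',
    Real.log_mul hfb.ne' hfc.ne']
  exact hf.add_le_add_of_add_eq ha hd hab hbd hsum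

lemma integrableOn_Ioi_comp_sub {E : Type*} [NormedAddCommGroup E] {f : ℝ → E} {a : ℝ} (h : ℝ)
    (hf : IntegrableOn f (Ioi (a - h))) :
    IntegrableOn (fun x => f (x - h)) (Ioi a) := by
  have := (measurePreserving_sub_right volume h).integrableOn_comp_preimage
    (measurableEmbedding_subRight h) (f := f) (s := Ioi (a - h))
  simpa [Function.comp_def] using this.2 hf

lemma setIntegral_Ioi_comp_sub {E : Type*} [NormedAddCommGroup E] [NormedSpace ℝ E]
    (f : ℝ → E) (a h : ℝ) :
    ∫ x in Ioi a, f (x - h) = ∫ x in Ioi (a - h), f x := by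
  have := (measurePreserving_sub_right volume h).setIntegral_preimage_emb
    (measurableEmbedding_subRight h) f (Ioi (a - h))
  simpa using this

lemma setIntegral_pos_of_pos {X : Type*} [MeasurableSpace X] {μ : Measure X} {s : Set X}
    {f : X → ℝ} (hs : MeasurableSet s) (hμ : μ s ≠ 0) (hpos : ∀ x ∈ s, 0 < f x)
    (hf : IntegrableOn f s μ) :
    0 < ∫ x in s, f x ∂μ := by
  have hnn : 0 ≤ᵐ[μ.restrict s] f := by
    filter_upwards [ae_restrict_mem hs] with x hx using (hpos x hx).le
  rw [setIntegral_pos_iff_support_of_nonneg_ae hnn hf,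
    inter_eq_right.2 fun x hx => Function.mem_support.2 (hpos x hx).ne']
  exact pos_iff_ne_zero.2 hμ

lemma setIntegral_Ioi_le_div_mul_of_concaveOn_log {f : ℝ → ℝ} {m B : ℝ}
    (hpos : ∀ x ∈ Ici m, 0 < f x) (hf : ConcaveOn ℝ (Ici m) fun x => Real.log (f x))
    (hint : IntegrableOn f (Ioi m)) (hB : m ≤ B) :
    ∫ x in Ioi B, f x ≤ f B / f m * ∫ x in Ioi m, f x := by
  have hfm : 0 < f m := hpos m self_mem_Ici
  have hshift : ∀ x ∈ Ioi B, f x ≤ f B / f m * f (x - (B - m)) := by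
    intro x (hx : B < x)
    have h := mul_le_mul_of_concaveOn_log hpos hf (a := m) (b := x - (B - m)) (c := B) (d := x)
      self_mem_Ici (hB.trans hx.le) (by linarith) (by linarith) (by ring)
    rw [div_mul_eq_mul_div, le_div_iff₀ hfm]
    linarith
  have hint' : IntegrableOn (fun x => f (x - (B - m))) (Ioi B) :=
    integrableOn_Ioi_comp_sub _ (by rwa [sub_sub_cancel])
  calc ∫ x in Ioi B, f x ≤ ∫ x in Ioi B, f B / f m * f (x - (B - m)) :=
        setIntegral_mono_on (hint.mono_set (Ioi_subset_Ioi hB)) (hint'.const_mul _)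
          measurableSet_Ioi hshift
    _ = f B / f m * ∫ x in Ioi m, f x := by
        rw [integral_const_mul, setIntegral_Ioi_comp_sub, sub_sub_cancel]

theorem stmt17_general (f : ℝ → ℝ)
    (hpos : ∀ x ∈ Ioi (0 : ℝ), 0 < f x)
    (hconc : ConcaveOn ℝ (Ioi (0 : ℝ)) fun x => Real.log (f x))
    (hint : IntegrableOn f (Ioi (0 : ℝ)))
    (m : ℝ) (hm : 0 < m)
    (B ε : ℝ) (hB : m < B)
    (hratio : f B / f m < ε) :
    (∫ x in Ioi B, f x) / (∫ x in Ioi (0 : ℝ), f x) < ε := by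
  have hI : 0 < ∫ x in Ioi (0 : ℝ), f x :=
    setIntegral_pos_of_pos measurableSet_Ioi (by simp) hpos hint
  have htail := setIntegral_Ioi_le_div_mul_of_concaveOn_log (fun x hx => hpos x (hm.trans_le hx))
    (hconc.subset (Ici_subset_Ioi.2 hm) (convex_Ici m)) (hint.mono_set (Ioi_subset_Ioi hm.le))
    hB.le
  have hsub : ∫ x in Ioi m, f x ≤ ∫ x in Ioi (0 : ℝ), f x :=
    setIntegral_mono_set hint
      (by filter_upwards [ae_restrict_mem measurableSet_Ioi] with x hx using (hpos x hx).le)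
      (Ioi_subset_Ioi hm.le).eventuallyLE
  have hratio_nonneg : 0 ≤ f B / f m := (div_pos (hpos B (hm.trans hB)) (hpos m hm)).le
  rw [div_lt_iff₀ hI]
  calc ∫ x in Ioi B, f x ≤ f B / f m * ∫ x in Ioi m, f x := htail
    _ ≤ f B / f m * ∫ x in Ioi (0 : ℝ), f x := mul_le_mul_of_nonneg_left hsub hratio_nonneg
    _ < ε * ∫ x in Ioi (0 : ℝ), f x := mul_lt_mul_of_pos_right hratio hI

/-- Tail bound for a continuous, integrable, log-concave unimodal function on `(0,∞)`:
if `f` is positive on `(0,∞)`, nondecreasing on `(0,m]`, nonincreasing on `[m,∞)`, and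
`B > m` satisfies `f(B)/f(m) < ε` with `ε ∈ (0,1)`, then
`∫_B^∞ f / ∫_0^∞ f < ε`. -/
theorem stmt17 (f : ℝ → ℝ) (hcont : ContinuousOn f (Ioi (0 : ℝ)))
    (hpos : ∀ x ∈ Ioi (0 : ℝ), 0 < f x)
    (hconc : ConcaveOn ℝ (Ioi (0 : ℝ)) fun x => Real.log (f x))
    (hint : IntegrableOn f (Ioi (0 : ℝ)))
    (m : ℝ) (hm : 0 < m)
    (hmono : MonotoneOn f (Ioc (0 : ℝ) m)) (hanti : AntitoneOn f (Ici m))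
    (B ε : ℝ) (hB : m < B) (hε : ε ∈ Set.Ioo (0 : ℝ) 1)
    (hratio : f B / f m < ε) :
    (∫ x in Ioi B, f x) / (∫ x in Ioi (0 : ℝ), f x) < ε :=
  stmt17_general f hpos hconc hint m hm B ε hB hratio
end
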